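/- Let (f,g) ∈ 𝒞 with unique minimal set K, and let J⊆I be a nonempty open interval intersecting K. If J ⊆ int(F₁\W), then 𝓕(J)∩K ≠ ∅; symmetrically, if J ⊆ int(G₁\W), then 𝓖(J)∩K ≠ ∅. -/

import Mathlib

/-!
A minimal set `K` is compact and is the closure of the orbit of each of its points, so
`K ⊆ f(K) ∪ g(K)`. A point of `K ∩ (F₁ \ W)` lies below `g 0`, hence is `f` of a point of `K`
lying above `f 1`. Pulling this point back by `g` stays in `K` as long as it lies above `G₁`:
a point above `g² 0 > f 1` cannot be an `f`-image. So `𝓕` maps `K ∩ (F₁ \ W)` into `K`, and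
symmetrically `𝓖` maps `K ∩ (G₁ \ W)` into `K`; any point of `J ∩ K` is then a witness.
-/

open Set Function MeasureTheory

noncomputable section

namespace IFSPaper

/-- The closed unit interval `I = [0,1]` as a subset of `ℝ`. -/
def unitI : Set ℝ := Set.Icc 0 1

/-- Membership in the class `𝒜`: `f, g : I → I` are `C¹` diffeomorphisms onto their
images with `f 0 = 0`, `g 1 = 1`, `f x < x < g x` on `(0,1)` and `0 < g 0 < f 1 < 1`. -/
structure MemA (f g : ℝ → ℝ) : Prop where
  f_maps : Set.MapsTo f unitI unitI
  g_maps : Set.MapsTo g unitI unitI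
  f_c1 : ContDiff ℝ 1 f
  g_c1 : ContDiff ℝ 1 g
  f_inj : Set.InjOn f unitI
  g_inj : Set.InjOn g unitI
  f_deriv_ne : ∀ x ∈ unitI, deriv f x ≠ 0
  g_deriv_ne : ∀ x ∈ unitI, deriv g x ≠ 0
  f_zero : f 0 = 0
  g_one : g 1 = 1
  f_lt_id : ∀ x ∈ Set.Ioo (0:ℝ) 1, f x < x
  id_lt_g : ∀ x ∈ Set.Ioo (0:ℝ) 1, x < g x
  g0_pos : 0 < g 0
  g0_lt_f1 : g 0 < f 1
  f1_lt_one : f 1 < 1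

/-- The element of the semigroup `⟨f,g⟩₊` associated to a word in the two generators
(`true ↦ f`, `false ↦ g`). -/
def word (f g : ℝ → ℝ) : List Bool → ℝ → ℝ
  | [] => id
  | b :: t => (if b then f else g) ∘ word f g t

/-- The semigroup orbit `O₊(x) = {φ x : φ ∈ ⟨f,g⟩₊}` of a point `x`. -/
def orbitP (f g : ℝ → ℝ) (x : ℝ) : Set ℝ :=
  {y | ∃ w : List Bool, w ≠ [] ∧ word f g w x = y}

/-- `K` is a minimal set for the action of `⟨f,g⟩₊` on `I`. -/
def IsMinimalSet (f g : ℝ → ℝ) (K : Set ℝ) : Prop :=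
  K.Nonempty ∧ K ⊆ unitI ∧ ∀ x ∈ K, closure (orbitP f g x) = K

/-- The overlapping region `W = [g 0, f 1]`. -/
def ovW (f g : ℝ → ℝ) : Set ℝ := Set.Icc (g 0) (f 1)

/-- The fundamental domain `Fₙ = [f^[n+1] 1, f^[n] 1]`. -/
def Fint (f : ℝ → ℝ) (n : ℕ) : Set ℝ := Set.Icc (f^[n+1] 1) (f^[n] 1)

/-- The fundamental domain `Gₙ = [g^[n] 0, g^[n+1] 0]`. -/
def Gint (g : ℝ → ℝ) (n : ℕ) : Set ℝ := Set.Icc (g^[n] 0) (g^[n+1] 0)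

/-- Single overlapping property `So`: `f² 1 < g 0` and `f 1 < g² 0`. -/
def So (f g : ℝ → ℝ) : Prop := f (f 1) < g 0 ∧ f 1 < g (g 0)

/-- A (nonempty) closed bounded interval. -/
def IsClosedInterval (A : Set ℝ) : Prop := ∃ a b : ℝ, a ≤ b ∧ A = Set.Icc a b

/-- A closed bounded interval with nonempty interior. -/
def IsNondegClosedInterval (A : Set ℝ) : Prop := ∃ a b : ℝ, a < b ∧ A = Set.Icc a b

/-- A nonempty open bounded interval. -/
def IsOpenInterval (J : Set ℝ) : Prop := ∃ a b : ℝ, a < b ∧ J = Set.Ioo a b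

/-- Hole property `Ho` witnessed by the pair of holes `(Hf, Hg)`. -/
def HoleAt (f g : ℝ → ℝ) (Hf Hg : Set ℝ) : Prop :=
  IsNondegClosedInterval Hf ∧ IsNondegClosedInterval Hg ∧
  Hf ⊆ interior (Fint f 1 \ ovW f g) ∧
  Hg ⊆ interior (Gint g 1 \ ovW f g) ∧
  g '' Hf = Hg ∧ f '' Hg = Hf

/-- Hole property `Ho`. -/
def Ho (f g : ℝ → ℝ) : Prop := ∃ Hf Hg : Set ℝ, HoleAt f g Hf Hg

/-- The induced (first-return) map `𝓕 : F₁ \ {f 1} → G₁`,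
`𝓕 x = g^[-n x] (f⁻¹ x)` where `n x` is least with `g^[-n x] (f⁻¹ x) ∈ G₁`. -/
def calF (f g : ℝ → ℝ) (x : ℝ) : ℝ :=
  (Function.invFunOn g unitI)^[sInf {n : ℕ |
      (Function.invFunOn g unitI)^[n] (Function.invFunOn f unitI x) ∈ Gint g 1}]
    (Function.invFunOn f unitI x)

/-- The induced (first-return) map `𝓖 : G₁ \ {g 0} → F₁`. -/
def calG (f g : ℝ → ℝ) (x : ℝ) : ℝ :=
  (Function.invFunOn f unitI)^[sInf {n : ℕ |
      (Function.invFunOn f unitI)^[n] (Function.invFunOn g unitI x) ∈ Fint f 1}]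
    (Function.invFunOn g unitI x)

/-- Eventual expansion property `Ee`: `𝓕` is uniformly expanding outside `Hf`
and `𝓖` outside `Hg` (at all points where the derivative makes sense). -/
def Ee (f g : ℝ → ℝ) (Hf Hg : Set ℝ) : Prop :=
  ∃ μ : ℝ, 1 < μ ∧
    (∀ y ∈ Fint f 1 \ Hf, DifferentiableAt ℝ (calF f g) y → μ < deriv (calF f g) y) ∧
    (∀ y ∈ Gint g 1 \ Hg, DifferentiableAt ℝ (calG f g) y → μ < deriv (calG f g) y)

/-- The ruination region `R_f = 𝓕⁻¹(Hg) ⊆ F₁`. -/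
def Rf (f g : ℝ → ℝ) (Hg : Set ℝ) : Set ℝ :=
  {x | x ∈ Fint f 1 \ {f 1} ∧ calF f g x ∈ Hg}

/-- The ruination region `R_g = 𝓖⁻¹(Hf) ⊆ G₁`. -/
def Rg (f g : ℝ → ℝ) (Hf : Set ℝ) : Set ℝ :=
  {x | x ∈ Gint g 1 \ {g 0} ∧ calG f g x ∈ Hf}

/-- Castration property `Ca`: `W ⊆ int R_f ∪ int R_g`. -/
def Ca (f g : ℝ → ℝ) (Hf Hg : Set ℝ) : Prop :=
  ovW f g ⊆ interior (Rf f g Hg) ∪ interior (Rg f g Hf)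

/-- Membership in the class `𝒞` with the given holes `(Hf, Hg)`:
`(f,g) ∈ 𝒜` together with `So`, `Ho`, `Ee` and `Ca`. -/
def MemC (f g : ℝ → ℝ) (Hf Hg : Set ℝ) : Prop :=
  MemA f g ∧ So f g ∧ HoleAt f g Hf Hg ∧ Ee f g Hf Hg ∧ Ca f g Hf Hg

/-- The interval `I₋₁ = [0, 1/3 - ε]` of the appendix example. -/
def Im1 (ε : ℝ) : Set ℝ := Set.Icc 0 (1/3 - ε)

/-- The interval `I₀ = [1/3 + ε, 2/3 - ε]` of the appendix example. -/
def Iz (ε : ℝ) : Set ℝ := Set.Icc (1/3 + ε) (2/3 - ε)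

/-- The interval `I₁ = [2/3 + ε, 1]` of the appendix example. -/
def Ip1 (ε : ℝ) : Set ℝ := Set.Icc (2/3 + ε) 1

/-- The inclusion property of the appendix example. -/
def InclusionProp (f g : ℝ → ℝ) (ε : ℝ) : Prop :=
  f '' Im1 ε ⊆ Im1 ε ∧ f '' Iz ε ⊆ interior (Im1 ε) ∧ f '' Ip1 ε ⊆ interior (Iz ε) ∧
  g '' Ip1 ε ⊆ Ip1 ε ∧ g '' Iz ε ⊆ interior (Ip1 ε) ∧ g '' Im1 ε ⊆ interior (Iz ε)

/-- The strong uniform contraction property of the appendix example. -/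
def StrongContraction (f g : ℝ → ℝ) (ε lam : ℝ) : Prop :=
  ∀ x ∈ Im1 ε ∪ Iz ε ∪ Ip1 ε, deriv f x < lam ∧ deriv g x < lam

theorem Fint_one (f : ℝ → ℝ) : Fint f 1 = Icc (f (f 1)) (f 1) := rfl

theorem Gint_one (g : ℝ → ℝ) : Gint g 1 = Icc (g 0) (g (g 0)) := rfl

namespace MemA

variable {f g : ℝ → ℝ} (hA : MemA f g)
include hA

theorem strictMonoOn_f : StrictMonoOn f unitI :=
  hA.f_c1.continuous.continuousOn.strictMonoOn_of_injOn_Icc zero_le_one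
    (by linarith [hA.f_zero, hA.g0_pos, hA.g0_lt_f1]) hA.f_inj

theorem strictMonoOn_g : StrictMonoOn g unitI :=
  hA.g_c1.continuous.continuousOn.strictMonoOn_of_injOn_Icc zero_le_one
    (by linarith [hA.g_one, hA.g0_lt_f1, hA.f1_lt_one]) hA.g_inj

theorem f_one_mem : f 1 ∈ unitI :=
  ⟨by linarith [hA.g0_pos, hA.g0_lt_f1], hA.f1_lt_one.le⟩

theorem g_zero_mem : g 0 ∈ unitI :=
  ⟨hA.g0_pos.le, by linarith [hA.g0_lt_f1, hA.f1_lt_one]⟩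

theorem f_le_f_one {x : ℝ} (hx : x ∈ unitI) : f x ≤ f 1 :=
  hA.strictMonoOn_f.monotoneOn hx ⟨zero_le_one, le_rfl⟩ hx.2

theorem g_zero_le_g {x : ℝ} (hx : x ∈ unitI) : g 0 ≤ g x :=
  hA.strictMonoOn_g.monotoneOn ⟨le_rfl, zero_le_one⟩ hx hx.1

end MemA

namespace IsMinimalSet

variable {f g : ℝ → ℝ} {K : Set ℝ} (hK : IsMinimalSet f g K)
include hK

theorem word_mem (w : List Bool) {x : ℝ} (hx : x ∈ K) : word f g w x ∈ K := by
  cases w with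
  | nil => exact hx
  | cons b t =>
    rw [← hK.2.2 x hx]
    exact subset_closure ⟨b :: t, List.cons_ne_nil b t, rfl⟩

theorem subset_image_union (hf : Continuous f) (hg : Continuous g) : K ⊆ f '' K ∪ g '' K := by
  intro x hx
  have hKx : closure (orbitP f g x) = K := hK.2.2 x hx
  have hcompact : IsCompact K :=
    isCompact_Icc.of_isClosed_subset (hKx ▸ isClosed_closure) hK.2.1
  have horbit : orbitP f g x ⊆ f '' K ∪ g '' K := by
    rintro _ ⟨_ | ⟨b, t⟩, hw, rfl⟩
    · exact absurd rfl hw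
    · cases b
      · exact Or.inr ⟨_, hK.word_mem t hx, rfl⟩
      · exact Or.inl ⟨_, hK.word_mem t hx, rfl⟩
  have hclosed : IsClosed (f '' K ∪ g '' K) :=
    ((hcompact.image hf).union (hcompact.image hg)).isClosed
  exact closure_minimal horbit hclosed (hKx.symm ▸ hx)

end IsMinimalSet

theorem invFunOn_mem_of_mem_image {α β : Type*} [Nonempty α] {φ : α → β} {D K : Set α}
    (hinj : InjOn φ D) (hKD : K ⊆ D) {c : β} (hc : c ∈ φ '' K) :
    invFunOn φ D c ∈ K ∧ φ (invFunOn φ D c) = c := by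
  obtain ⟨z, hz, rfl⟩ := hc
  rw [hinj.leftInvOn_invFunOn (hKD hz)]
  exact ⟨hz, rfl⟩

/-- No return to `S` is needed: if no iterate lies in `S`, then `sInf ∅ = 0`. -/
theorem iterate_sInf_mem {α : Type*} {ψ : α → α} {S B : Set α}
    (hstep : ∀ c ∈ B, c ∉ S → ψ c ∈ B) {z : α} (hz : z ∈ B) :
    ψ^[sInf {n | ψ^[n] z ∈ S}] z ∈ B := by
  suffices ∀ j ≤ sInf {n | ψ^[n] z ∈ S}, ψ^[j] z ∈ B from this _ le_rfl
  intro j hj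
  induction j with
  | zero => exact hz
  | succ j ih =>
    rw [iterate_succ_apply']
    exact hstep _ (ih (by omega)) (Nat.notMem_of_lt_sInf (Nat.lt_of_succ_le hj))

section InducedMaps

variable {f g : ℝ → ℝ} {K : Set ℝ} (hA : MemA f g)
  (hK : K ⊆ f '' K ∪ g '' K) (hKI : K ⊆ unitI)
include hA hK hKI

theorem calF_mem (hSo : f 1 < g (g 0)) {x : ℝ} (hxK : x ∈ K)
    (hx : x ∈ Fint f 1 \ ovW f g) : calF f g x ∈ K := by
  simp only [Fint_one, ovW, mem_sdiff, mem_Icc, not_and, not_le] at hx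
  obtain ⟨⟨hx_lo, hx_hi⟩, hxW⟩ := hx
  have hx_lt : x < g 0 := lt_of_not_ge fun h => (hxW h).not_ge hx_hi
  have hx_f : x ∈ f '' K := (hK hxK).resolve_right
    (by rintro ⟨y, hy, rfl⟩; exact (hA.g_zero_le_g (hKI hy)).not_gt hx_lt)
  obtain ⟨hzK, hfz⟩ := invFunOn_mem_of_mem_image hA.f_inj hKI hx_f
  set z := invFunOn f unitI x
  have hz : g 0 ≤ z := by
    have : f 1 ≤ z :=
      (hA.strictMonoOn_f.le_iff_le hA.f_one_mem (hKI hzK)).mp (by rwa [hfz])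
    linarith [hA.g0_lt_f1]
  refine (iterate_sInf_mem (B := K ∩ Ici (g 0)) ?_ ⟨hzK, hz⟩).1
  rintro c ⟨hcK, hc⟩ hcG
  have hc_gt : g (g 0) < c := by
    by_contra h
    exact hcG (by rw [Gint_one]; exact ⟨hc, not_lt.mp h⟩)
  have hc_g : c ∈ g '' K := (hK hcK).resolve_left
    (by rintro ⟨y, hy, rfl⟩; linarith [hA.f_le_f_one (hKI hy)])
  obtain ⟨hc'K, hgc'⟩ := invFunOn_mem_of_mem_image hA.g_inj hKI hc_g
  exact ⟨hc'K, ((hA.strictMonoOn_g.lt_iff_lt hA.g_zero_mem (hKI hc'K)).mp (by rwa [hgc'])).le⟩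

theorem calG_mem (hSo : f (f 1) < g 0) {x : ℝ} (hxK : x ∈ K)
    (hx : x ∈ Gint g 1 \ ovW f g) : calG f g x ∈ K := by
  simp only [Gint_one, ovW, mem_sdiff, mem_Icc, not_and, not_le] at hx
  obtain ⟨⟨hx_lo, hx_hi⟩, hxW⟩ := hx
  have hx_gt : f 1 < x := hxW hx_lo
  have hx_g : x ∈ g '' K := (hK hxK).resolve_left
    (by rintro ⟨y, hy, rfl⟩; exact (hA.f_le_f_one (hKI hy)).not_gt hx_gt)
  obtain ⟨hzK, hgz⟩ := invFunOn_mem_of_mem_image hA.g_inj hKI hx_g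
  set z := invFunOn g unitI x
  have hz : z ≤ f 1 := by
    have : z ≤ g 0 :=
      (hA.strictMonoOn_g.le_iff_le (hKI hzK) hA.g_zero_mem).mp (by rwa [hgz])
    linarith [hA.g0_lt_f1]
  refine (iterate_sInf_mem (B := K ∩ Iic (f 1)) ?_ ⟨hzK, hz⟩).1
  rintro c ⟨hcK, hc⟩ hcF
  have hc_lt : c < f (f 1) := by
    by_contra h
    exact hcF (by rw [Fint_one]; exact ⟨not_lt.mp h, hc⟩)
  have hc_f : c ∈ f '' K := (hK hcK).resolve_right
    (by rintro ⟨y, hy, rfl⟩; linarith [hA.g_zero_le_g (hKI hy)])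
  obtain ⟨hc'K, hfc'⟩ := invFunOn_mem_of_mem_image hA.f_inj hKI hc_f
  exact ⟨hc'K, ((hA.strictMonoOn_f.lt_iff_lt (hKI hc'K) hA.f_one_mem).mp (by rwa [hfc'])).le⟩

end InducedMaps

theorem image_meets_minimal_set_general (f g : ℝ → ℝ) (Hf Hg K J : Set ℝ)
    (hC : MemC f g Hf Hg) (hK : IsMinimalSet f g K)
    (hJK : (J ∩ K).Nonempty) :
    (J ⊆ interior (Fint f 1 \ ovW f g) → ((calF f g '' J) ∩ K).Nonempty) ∧
    (J ⊆ interior (Gint g 1 \ ovW f g) → ((calG f g '' J) ∩ K).Nonempty) := by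
  obtain ⟨hA, hSo, -⟩ := hC
  obtain ⟨x, hxJ, hxK⟩ := hJK
  have hKimg := hK.subset_image_union hA.f_c1.continuous hA.g_c1.continuous
  exact ⟨fun hJF => ⟨_, mem_image_of_mem _ hxJ,
      calF_mem hA hKimg hK.2.1 hSo.2 hxK (interior_subset (hJF hxJ))⟩,
    fun hJG => ⟨_, mem_image_of_mem _ hxJ,
      calG_mem hA hKimg hK.2.1 hSo.1 hxK (interior_subset (hJG hxJ))⟩⟩

/-- for `(f,g) ∈ 𝒞` with minimal set `K` and a nonempty open interval
`J ⊆ I` meeting `K`: if `J ⊆ int (F₁ \ W)` then `𝓕(J)` meets `K`, and if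
`J ⊆ int (G₁ \ W)` then `𝓖(J)` meets `K`. -/
theorem image_meets_minimal_set (f g : ℝ → ℝ) (Hf Hg K J : Set ℝ)
    (hC : MemC f g Hf Hg) (hK : IsMinimalSet f g K)
    (hJ : IsOpenInterval J) (hJI : J ⊆ unitI) (hJK : (J ∩ K).Nonempty) :
    (J ⊆ interior (Fint f 1 \ ovW f g) → ((calF f g '' J) ∩ K).Nonempty) ∧
    (J ⊆ interior (Gint g 1 \ ovW f g) → ((calG f g '' J) ∩ K).Nonempty) :=
  image_meets_minimal_set_general f g Hf Hg K J hC hK hJK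

end IFSPaper
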